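/- arXiv:0903.5458 — 7 statements merged into one kernel-verified Lean document; each statement's English description precedes it below -/
import Mathlib

section
/- Let (P_l)_{l∈ℕ} be a family of pairwise-orthogonal orthogonal projections on a complex Hilbert space H, let (h_l) be real numbers, and set H_L := Σ_{l=0}^L h_l P_l. Let n ≥ 1 be an integer, let (s_l) be strictly positive real numbers, and let R be a bounded operator on H satisfying R P_l = s_l^{-n} P_l for every l. Then for all natural numbers L ≤ M and every t ∈ ℝ, ‖R (exp(i t H_M) − exp(i t H_L))‖ ≤ 2 √(Σ_{k=L+1}^{M} s_k^{-2n}). -/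
/-!
For pairwise orthogonal idempotents, `(∑ aᵢ Pᵢ) ^ (m + 1) = ∑ aᵢ ^ (m + 1) Pᵢ`, so the exponential
series gives `exp (∑ aᵢ Pᵢ) = 1 + ∑ (exp aᵢ - 1) Pᵢ`. Hence `R (exp (i t H_M) - exp (i t H_L))` is
`∑_{L < k ≤ M} (exp (i t h_k) - 1) s_k⁻ⁿ P_k`. The ranges of the `P_k` are mutually orthogonal, so
by Pythagoras the norm of such a sum is at most the `ℓ²` norm of its coefficients, and each
coefficient has modulus at most `2 s_k⁻ⁿ`.
-/

open NormedSpace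
open scoped InnerProductSpace

section OrthogonalIdempotents

variable {ι 𝔸 : Type*}

theorem sum_smul_pow_succ_of_orthogonal {R : Type*} [CommSemiring R] [Semiring 𝔸] [Algebra R 𝔸]
    {P : ι → 𝔸} (hidem : ∀ i, IsIdempotentElem (P i)) (horth : Pairwise fun i j ↦ P i * P j = 0)
    (a : ι → R) (s : Finset ι) (m : ℕ) :
    (∑ i ∈ s, a i • P i) ^ (m + 1) = ∑ i ∈ s, a i ^ (m + 1) • P i := by
  induction m with
  | zero => simp
  | succ m ih =>
    rw [pow_succ, ih, Finset.sum_mul_sum]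
    refine Finset.sum_congr rfl fun i hi ↦ ?_
    rw [Finset.sum_eq_single_of_mem i hi fun j _ hji ↦ by
        rw [smul_mul_smul_comm, horth hji.symm, smul_zero],
      smul_mul_smul_comm, (hidem i).eq, ← pow_succ]

theorem exp_sum_smul_of_orthogonal [NormedRing 𝔸] [NormedAlgebra ℂ 𝔸] [CompleteSpace 𝔸]
    {P : ι → 𝔸} (hidem : ∀ i, IsIdempotentElem (P i)) (horth : Pairwise fun i j ↦ P i * P j = 0)
    (a : ι → ℂ) (s : Finset ι) :
    exp (∑ i ∈ s, a i • P i) = 1 + ∑ i ∈ s, (Complex.exp (a i) - 1) • P i := by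
  have hterm : ∀ m : ℕ, (m.factorial⁻¹ : ℂ) • (∑ i ∈ s, a i • P i) ^ m =
      ∑ i ∈ s, ((m.factorial⁻¹ : ℂ) • a i ^ m) • P i +
        (Pi.single 0 (1 - ∑ i ∈ s, P i) : ℕ → 𝔸) m := by
    rintro (_ | m)
    · simp
    · simp [sum_smul_pow_succ_of_orthogonal hidem horth, Finset.smul_sum, smul_smul]
  have hsum : HasSum (fun m : ℕ ↦ (m.factorial⁻¹ : ℂ) • (∑ i ∈ s, a i • P i) ^ m)
      (∑ i ∈ s, Complex.exp (a i) • P i + (1 - ∑ i ∈ s, P i)) := by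
    simp only [hterm]
    refine (hasSum_sum fun i _ ↦ ?_).add (hasSum_pi_single 0 _)
    rw [Complex.exp_eq_exp_ℂ]
    exact (exp_series_hasSum_exp' (a i)).smul_const (P i)
  rw [(exp_series_hasSum_exp' (𝕂 := ℂ) _).unique hsum]
  simp only [sub_smul, one_smul, Finset.sum_sub_distrib]
  abel

theorem exp_sum_range_sub_exp_sum_range [NormedRing 𝔸] [NormedAlgebra ℂ 𝔸] [CompleteSpace 𝔸]
    {P : ℕ → 𝔸} (hidem : ∀ i, IsIdempotentElem (P i)) (horth : Pairwise fun i j ↦ P i * P j = 0)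
    (a : ℕ → ℂ) {L M : ℕ} (hLM : L ≤ M) :
    exp (∑ i ∈ Finset.range (M + 1), a i • P i) - exp (∑ i ∈ Finset.range (L + 1), a i • P i) =
      ∑ i ∈ Finset.Ioc L M, (Complex.exp (a i) - 1) • P i := by
  rw [exp_sum_smul_of_orthogonal hidem horth, exp_sum_smul_of_orthogonal hidem horth,
    add_sub_add_left_eq_sub, ← Finset.sum_Ico_eq_sub _ (by omega),
    Finset.Ico_add_one_add_one_eq_Ioc]

end OrthogonalIdempotents

theorem Complex.norm_exp_I_mul_ofReal_sub_one_le_two (θ : ℝ) : ‖exp (I * θ) - 1‖ ≤ 2 :=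
  (norm_sub_le _ _).trans (by rw [norm_exp_I_mul_ofReal, norm_one]; norm_num)

section StarProjections

variable {ι 𝕜 E : Type*} [RCLike 𝕜] [NormedAddCommGroup E] [InnerProductSpace 𝕜 E]

theorem norm_sum_sq_of_pairwise_inner_eq_zero {v : ι → E} (hv : Pairwise fun i j ↦ ⟪v i, v j⟫_𝕜 = 0)
    (s : Finset ι) : ‖∑ i ∈ s, v i‖ ^ 2 = ∑ i ∈ s, ‖v i‖ ^ 2 := by
  classical
  induction s using Finset.induction_on with
  | empty => simp
  | insert j s hj ih =>
    rw [Finset.sum_insert hj, Finset.sum_insert hj, norm_add_sq (𝕜 := 𝕜), ih, inner_sum,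
      Finset.sum_eq_zero fun i hi ↦ hv (ne_of_mem_of_not_mem hi hj).symm, map_zero, mul_zero,
      add_zero]

variable [CompleteSpace E]

theorem inner_apply_eq_zero_of_mul_eq_zero {P Q : E →L[𝕜] E} (hP : IsSelfAdjoint P)
    (hPQ : P * Q = 0) (x y : E) : ⟪P x, Q y⟫_𝕜 = 0 := by
  calc ⟪P x, Q y⟫_𝕜 = ⟪x, (P * Q) y⟫_𝕜 := hP.isSymmetric x (Q y)
    _ = 0 := by rw [hPQ, zero_apply, inner_zero_right]

theorem norm_sum_smul_le_sqrt_of_isStarProjection {P : ι → E →L[𝕜] E}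
    (hP : ∀ i, IsStarProjection (P i)) (horth : Pairwise fun i j ↦ P i * P j = 0)
    (c : ι → 𝕜) (s : Finset ι) :
    ‖∑ i ∈ s, c i • P i‖ ≤ √(∑ i ∈ s, ‖c i‖ ^ 2) := by
  refine ContinuousLinearMap.opNorm_le_bound _ (Real.sqrt_nonneg _) fun x ↦ ?_
  simp only [sum_apply, smul_apply]
  have hortho : Pairwise fun i j ↦ ⟪c i • P i x, c j • P j x⟫_𝕜 = 0 := fun i j hij ↦ by
    dsimp only
    rw [inner_smul_left, inner_smul_right,
      inner_apply_eq_zero_of_mul_eq_zero (hP i).isSelfAdjoint (horth hij), mul_zero, mul_zero]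
  have hsq : ‖∑ i ∈ s, c i • P i x‖ ^ 2 ≤ (√(∑ i ∈ s, ‖c i‖ ^ 2) * ‖x‖) ^ 2 := by
    rw [norm_sum_sq_of_pairwise_inner_eq_zero hortho, mul_pow,
      Real.sq_sqrt (Finset.sum_nonneg fun i _ ↦ sq_nonneg _), Finset.sum_mul]
    refine Finset.sum_le_sum fun i _ ↦ ?_
    rw [norm_smul, mul_pow]
    gcongr
    exact (P i).le_of_opNorm_le ((hP i).norm_le) x |>.trans_eq (one_mul _)
  exact (pow_le_pow_iff_left₀ (norm_nonneg _) (by positivity) two_ne_zero).1 hsq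

end StarProjections

theorem stmt_3_general {H : Type*} [NormedAddCommGroup H] [InnerProductSpace ℂ H] [CompleteSpace H]
    (P : ℕ → H →L[ℂ] H)
    (hP_sa : ∀ l, IsSelfAdjoint (P l))
    (hP_idem : ∀ l, P l * P l = P l)
    (hP_orth : ∀ l k, l ≠ k → P l * P k = 0)
    (h : ℕ → ℝ)
    (HL : ℕ → H →L[ℂ] H)
    (hHL : ∀ L, HL L = ∑ l ∈ Finset.range (L + 1), (h l : ℂ) • P l)
    (n : ℕ)
    (s : ℕ → ℝ)
    (R : H →L[ℂ] H)
    (hR : ∀ l, R * P l = (((s l ^ n)⁻¹ : ℝ) : ℂ) • P l)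
    (L M : ℕ) (hLM : L ≤ M) (t : ℝ) :
    ‖R * (exp ((Complex.I * t) • HL M) - exp ((Complex.I * t) • HL L))‖ ≤
      2 * Real.sqrt (∑ k ∈ Finset.Ioc L M, (s k ^ (2 * n))⁻¹) := by
  set c : ℕ → ℂ := fun k ↦ (Complex.exp (Complex.I * ↑(t * h k)) - 1) * ((s k ^ n)⁻¹ : ℝ)
  have hHL_smul (N : ℕ) : (Complex.I * t) • HL N =
      ∑ l ∈ Finset.range (N + 1), (Complex.I * ↑(t * h l)) • P l := by
    rw [hHL, Finset.smul_sum]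
    simp only [smul_smul, Complex.ofReal_mul, ← mul_assoc]
  have hdiff : R * (exp ((Complex.I * t) • HL M) - exp ((Complex.I * t) • HL L)) =
      ∑ k ∈ Finset.Ioc L M, c k • P k := by
    rw [hHL_smul, hHL_smul, exp_sum_range_sub_exp_sum_range hP_idem hP_orth _ hLM, Finset.mul_sum]
    refine Finset.sum_congr rfl fun k _ ↦ ?_
    rw [mul_smul_comm, hR, smul_smul]
  have hc (k : ℕ) : ‖c k‖ ^ 2 ≤ 4 * (s k ^ (2 * n))⁻¹ := by
    rw [norm_mul, mul_pow, Complex.norm_real, Real.norm_eq_abs, sq_abs, pow_mul', inv_pow]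
    gcongr
    calc ‖Complex.exp (Complex.I * ↑(t * h k)) - 1‖ ^ 2 ≤ 2 ^ 2 := by
          gcongr; exact Complex.norm_exp_I_mul_ofReal_sub_one_le_two _
      _ = 4 := by norm_num
  calc ‖R * (exp ((Complex.I * t) • HL M) - exp ((Complex.I * t) • HL L))‖
      = ‖∑ k ∈ Finset.Ioc L M, c k • P k‖ := by rw [hdiff]
    _ ≤ √(∑ k ∈ Finset.Ioc L M, ‖c k‖ ^ 2) :=
      norm_sum_smul_le_sqrt_of_isStarProjection (fun l ↦ ⟨hP_idem l, hP_sa l⟩) hP_orth c _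
    _ ≤ √(4 * ∑ k ∈ Finset.Ioc L M, (s k ^ (2 * n))⁻¹) := by
      rw [Finset.mul_sum]
      exact Real.sqrt_le_sqrt (Finset.sum_le_sum fun k _ ↦ hc k)
    _ = 2 * √(∑ k ∈ Finset.Ioc L M, (s k ^ (2 * n))⁻¹) := by
      rw [Real.sqrt_mul zero_le_four, show (4 : ℝ) = 2 ^ 2 by norm_num, Real.sqrt_sq zero_le_two]

/-- Quantitative estimate (proof of Proposition 1, part 1):
if `R` realizes `S^{-n}` (i.e. `R P_l = s_l^{-n} P_l`), then
`‖R (exp(i t H_M) − exp(i t H_L))‖ ≤ 2 √(Σ_{k=L+1}^M s_k^{-2n})`. -/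
theorem stmt_3 {H : Type*} [NormedAddCommGroup H] [InnerProductSpace ℂ H] [CompleteSpace H]
    (P : ℕ → H →L[ℂ] H)
    (hP_sa : ∀ l, IsSelfAdjoint (P l))
    (hP_idem : ∀ l, P l * P l = P l)
    (hP_orth : ∀ l k, l ≠ k → P l * P k = 0)
    (h : ℕ → ℝ)
    (HL : ℕ → H →L[ℂ] H)
    (hHL : ∀ L, HL L = ∑ l ∈ Finset.range (L + 1), (h l : ℂ) • P l)
    (n : ℕ) (hn : 1 ≤ n)
    (s : ℕ → ℝ) (hs : ∀ l, 0 < s l)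
    (R : H →L[ℂ] H)
    (hR : ∀ l, R * P l = (((s l ^ n)⁻¹ : ℝ) : ℂ) • P l)
    (L M : ℕ) (hLM : L ≤ M) (t : ℝ) :
    ‖R * (exp ((Complex.I * t) • HL M) - exp ((Complex.I * t) • HL L))‖ ≤
      2 * Real.sqrt (∑ k ∈ Finset.Ioc L M, (s k ^ (2 * n))⁻¹) :=
  stmt_3_general P hP_sa hP_idem hP_orth h HL hHL n s R hR L M hLM t
end

section
/- Let (P_l)_{l∈ℕ} be a family of pairwise-orthogonal orthogonal projections on a complex Hilbert space H, let (s_l) be strictly positive real numbers, and let R be a bounded operator on H with R P_l = s_l^{-1} P_l for every l. Set Q_L := Σ_{l=0}^L P_l, S_L := Σ_{l=0}^L s_l P_l, s_L^+ := √(Σ_{l=0}^L s_l²) and s_L^- := √(Σ_{l=0}^L s_l^{-2}). Then for every bounded operator X on H and every L: ‖R (Q_L X Q_L) S_L‖ ≤ s_L^+ s_L^- ‖Q_L X Q_L‖. -/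
/-!
Write `R Q_L = Σ_{l ≤ L} s_l⁻¹ P_l`. Since `Q_L` is idempotent, `R (Q_L X Q_L) S_L` factors as
`(R Q_L) (Q_L X Q_L) S_L`, so it suffices to bound the norms of the two combinations
`Σ c_l P_l` of orthogonal projections. For `T = Σ c_l P_l` the C⋆-identity gives
`‖T‖² = ‖T⋆ T‖ = ‖Σ |c_l|² P_l‖ ≤ Σ |c_l|²`.
-/

theorem OrthogonalIdempotents.star_sum_smul_mul_sum_smul {R A ι : Type*} [CommSemiring R]
    [StarRing R] [Semiring A] [StarRing A] [Algebra R A] [StarModule R A] {P : ι → A}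
    (hP : OrthogonalIdempotents P) (hP_sa : ∀ i, IsSelfAdjoint (P i)) (c : ι → R)
    (s : Finset ι) :
    star (∑ i ∈ s, c i • P i) * ∑ i ∈ s, c i • P i = ∑ i ∈ s, (star (c i) * c i) • P i := by
  classical
  simp only [star_sum, star_smul, (hP_sa _).star_eq, Finset.sum_mul, Finset.mul_sum, smul_mul_smul,
    hP.mul_eq, smul_ite, smul_zero, Finset.sum_ite_eq']
  exact Finset.sum_congr rfl fun i hi => if_pos hi

theorem OrthogonalIdempotents.norm_sum_smul_le {𝕜 A ι : Type*} [RCLike 𝕜] [NormedRing A]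
    [StarRing A] [CStarRing A] [NormedAlgebra 𝕜 A] [StarModule 𝕜 A] {P : ι → A}
    (hP : OrthogonalIdempotents P) (hP_sa : ∀ i, IsSelfAdjoint (P i)) (c : ι → 𝕜)
    (s : Finset ι) :
    ‖∑ i ∈ s, c i • P i‖ ≤ √(∑ i ∈ s, ‖c i‖ ^ 2) := by
  refine Real.le_sqrt_of_sq_le ?_
  calc ‖∑ i ∈ s, c i • P i‖ ^ 2 = ‖∑ i ∈ s, (star (c i) * c i) • P i‖ := by
        rw [sq, ← CStarRing.norm_star_mul_self, hP.star_sum_smul_mul_sum_smul hP_sa]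
    _ ≤ ∑ i ∈ s, ‖star (c i) * c i‖ * ‖P i‖ := norm_sum_le_of_le _ fun i _ => norm_smul_le _ _
    _ ≤ ∑ i ∈ s, ‖c i‖ ^ 2 := by
        gcongr with i
        calc ‖star (c i) * c i‖ * ‖P i‖ ≤ ‖star (c i) * c i‖ * 1 := by
              gcongr; exact IsStarProjection.norm_le _ ⟨hP.idem i, hP_sa i⟩
          _ = ‖c i‖ ^ 2 := by rw [mul_one, norm_mul, norm_star, sq]

theorem stmt_10_general {H : Type*} [NormedAddCommGroup H] [InnerProductSpace ℂ H] [CompleteSpace H]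
    (P : ℕ → H →L[ℂ] H)
    (hP_sa : ∀ l, IsSelfAdjoint (P l))
    (hP_idem : ∀ l, P l * P l = P l)
    (hP_orth : ∀ l k, l ≠ k → P l * P k = 0)
    (s : ℕ → ℝ)
    (R : H →L[ℂ] H)
    (hR : ∀ l, R * P l = (((s l)⁻¹ : ℝ) : ℂ) • P l)
    (Q SL : ℕ → H →L[ℂ] H)
    (hQ : ∀ L, Q L = ∑ l ∈ Finset.range (L + 1), P l)
    (hSL : ∀ L, SL L = ∑ l ∈ Finset.range (L + 1), (s l : ℂ) • P l)
    (X : H →L[ℂ] H) (L : ℕ) :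
    ‖R * (Q L * X * Q L) * SL L‖ ≤
      Real.sqrt (∑ l ∈ Finset.range (L + 1), (s l) ^ 2) *
        Real.sqrt (∑ l ∈ Finset.range (L + 1), ((s l)⁻¹) ^ 2) * ‖Q L * X * Q L‖ := by
  have hP : OrthogonalIdempotents P := ⟨hP_idem, fun l k hlk => hP_orth l k hlk⟩
  have hQ_idem : Q L * Q L = Q L := by rw [hQ]; exact hP.isIdempotentElem_sum
  have hRQ : R * Q L = ∑ l ∈ Finset.range (L + 1), (((s l)⁻¹ : ℝ) : ℂ) • P l := by
    rw [hQ, Finset.mul_sum]; exact Finset.sum_congr rfl fun l _ => hR l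
  have hR_factor : R * (Q L * X * Q L) = R * Q L * (Q L * X * Q L) := by
    rw [mul_assoc R, ← mul_assoc (Q L), ← mul_assoc (Q L), hQ_idem]
  have hRQ_norm := hP.norm_sum_smul_le hP_sa (fun l => (((s l)⁻¹ : ℝ) : ℂ)) (Finset.range (L + 1))
  have hSL_norm := hP.norm_sum_smul_le hP_sa (fun l => ((s l : ℝ) : ℂ)) (Finset.range (L + 1))
  simp only [Complex.norm_real, Real.norm_eq_abs, sq_abs, ← hRQ, ← hSL] at hRQ_norm hSL_norm
  calc ‖R * (Q L * X * Q L) * SL L‖ ≤ ‖R * Q L‖ * ‖Q L * X * Q L‖ * ‖SL L‖ := by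
        rw [hR_factor]; exact norm_mul₃_le
    _ ≤ _ := by
        rw [mul_right_comm, mul_comm (Real.sqrt _)]
        gcongr

/-- (Main estimate of Lemma 3 of the paper.) With `R` realizing
`S^{-1}` and `S_L = Σ_{l≤L} s_l P_l`, for every bounded `X`,
`‖R (Q_L X Q_L) S_L‖ ≤ s_L^+ s_L^- ‖Q_L X Q_L‖`, where
`s_L^+ = √(Σ_{l≤L} s_l²)` and `s_L^- = √(Σ_{l≤L} s_l^{-2})`. -/
theorem stmt_10 {H : Type*} [NormedAddCommGroup H] [InnerProductSpace ℂ H] [CompleteSpace H]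
    (P : ℕ → H →L[ℂ] H)
    (hP_sa : ∀ l, IsSelfAdjoint (P l))
    (hP_idem : ∀ l, P l * P l = P l)
    (hP_orth : ∀ l k, l ≠ k → P l * P k = 0)
    (s : ℕ → ℝ) (hs : ∀ l, 0 < s l)
    (R : H →L[ℂ] H)
    (hR : ∀ l, R * P l = (((s l)⁻¹ : ℝ) : ℂ) • P l)
    (Q SL : ℕ → H →L[ℂ] H)
    (hQ : ∀ L, Q L = ∑ l ∈ Finset.range (L + 1), P l)
    (hSL : ∀ L, SL L = ∑ l ∈ Finset.range (L + 1), (s l : ℂ) • P l)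
    (X : H →L[ℂ] H) (L : ℕ) :
    ‖R * (Q L * X * Q L) * SL L‖ ≤
      Real.sqrt (∑ l ∈ Finset.range (L + 1), (s l) ^ 2) *
        Real.sqrt (∑ l ∈ Finset.range (L + 1), ((s l)⁻¹) ^ 2) * ‖Q L * X * Q L‖ :=
  stmt_10_general P hP_sa hP_idem hP_orth s R hR Q SL hQ hSL X L
end

section
/- Let (P_l)_{l∈ℕ} be a family of pairwise-orthogonal orthogonal projections on a complex Hilbert space H, let (s_l) be strictly positive real numbers, and let R be a bounded operator on H with R P_l = s_l^{-1} P_l for every l. Set Q_L := Σ_{l=0}^L P_l, S_L := Σ_{l=0}^L s_l P_l, s_L^+ := √(Σ_{l=0}^L s_l²) and s_L^- := √(Σ_{l=0}^L s_l^{-2}). For a bounded operator X define recursively Y_0 := Q_L X Q_L and Y_{n+1} := R Y_n S_L. Then for every n ≥ 0: (i) Y_n = Q_L Y_n Q_L, and (ii) ‖Y_n‖ ≤ (s_L^+ s_L^-)^n ‖Q_L X Q_L‖. -/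
/-!
Every operator in sight except `R` and `X` is diagonal for the pairwise orthogonal projections `P_l`,
and products of diagonal operators multiply coefficientwise. Hence `Q_L` is a projection fixing
`S_L` and `R Q_L` on both sides, so `Y_n` stays in the corner `Q_L (·) Q_L` and
`Y_{n+1} = (R Q_L) Y_n S_L`. The norm of a diagonal operator `∑ c_l P_l` is at most `√(∑ c_l²)`
by Pythagoras, since the `P_l x` are pairwise orthogonal and each `‖P_l x‖ ≤ ‖x‖`; this bounds
`‖R Q_L‖` by `s_L^-` and `‖S_L‖` by `s_L^+`.
-/

open scoped InnerProductSpace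

section Pythagoras

variable {𝕜 E ι : Type*} [RCLike 𝕜] [NormedAddCommGroup E] [InnerProductSpace 𝕜 E]

theorem norm_sum_sq_eq_sum_norm_sq_of_pairwise_inner_eq_zero [DecidableEq ι] (s : Finset ι)
    (v : ι → E) (hv : (s : Set ι).Pairwise fun i j => ⟪v i, v j⟫_𝕜 = 0) :
    ‖∑ i ∈ s, v i‖ ^ 2 = ∑ i ∈ s, ‖v i‖ ^ 2 := by
  induction s using Finset.induction_on with
  | empty => simp
  | insert a s ha ih =>
    have hv' : (s : Set ι).Pairwise fun i j => ⟪v i, v j⟫_𝕜 = 0 :=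
      hv.mono (by simp)
    have horth : ⟪v a, ∑ i ∈ s, v i⟫_𝕜 = 0 := by
      rw [inner_sum]
      refine Finset.sum_eq_zero fun i hi => hv (by simp) (by simp [hi]) ?_
      rintro rfl
      exact ha hi
    rw [Finset.sum_insert ha, Finset.sum_insert ha, ← ih hv', sq, sq, sq,
      norm_add_sq_eq_norm_sq_add_norm_sq_of_inner_eq_zero _ _ horth]

end Pythagoras

section Diagonal

variable {R A ι : Type*} [CommSemiring R] [Semiring A] [Algebra R A] {P : ι → A}

theorem sum_smul_mul_sum_smul (hP_idem : ∀ l, P l * P l = P l)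
    (hP_orth : ∀ l k, l ≠ k → P l * P k = 0) (f g : ι → R) (F : Finset ι) :
    (∑ l ∈ F, f l • P l) * (∑ l ∈ F, g l • P l) = ∑ l ∈ F, (f l * g l) • P l := by
  classical
  rw [Finset.sum_mul_sum]
  refine Finset.sum_congr rfl fun l hl => ?_
  rw [Finset.sum_eq_single_of_mem l hl, smul_mul_smul_comm, hP_idem]
  intro k _ hk
  rw [smul_mul_smul_comm, hP_orth l k hk.symm, smul_zero]

end Diagonal

section OrthogonalProjections

variable {𝕜 H ι : Type*} [RCLike 𝕜] [NormedAddCommGroup H] [InnerProductSpace 𝕜 H]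
  [CompleteSpace H] {P : ι → H →L[𝕜] H}

theorem inner_apply_apply_eq_zero_of_mul_eq_zero {l k : ι} (hl : IsSelfAdjoint (P l))
    (hlk : P l * P k = 0) (x y : H) : ⟪P l x, P k y⟫_𝕜 = 0 := by
  rw [← ContinuousLinearMap.adjoint_inner_right, ← ContinuousLinearMap.star_eq_adjoint, hl.star_eq,
    ← mul_apply_eq_comp, hlk, zero_apply, inner_zero_right]

theorem norm_sum_smul_le_sqrt_sum_sq (hP_sa : ∀ l, IsSelfAdjoint (P l))
    (hP_idem : ∀ l, P l * P l = P l) (hP_orth : ∀ l k, l ≠ k → P l * P k = 0)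
    (c : ι → ℝ) (F : Finset ι) :
    ‖∑ l ∈ F, (c l : 𝕜) • P l‖ ≤ √(∑ l ∈ F, c l ^ 2) := by
  classical
  refine ContinuousLinearMap.opNorm_le_bound _ (Real.sqrt_nonneg _) fun x => ?_
  have hpyth : ‖(∑ l ∈ F, (c l : 𝕜) • P l) x‖ ^ 2 = ∑ l ∈ F, c l ^ 2 * ‖P l x‖ ^ 2 := by
    rw [sum_apply,
      norm_sum_sq_eq_sum_norm_sq_of_pairwise_inner_eq_zero (𝕜 := 𝕜) _ _ fun l _ k _ hlk => by
        simp [inner_smul_left, inner_smul_right,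
          inner_apply_apply_eq_zero_of_mul_eq_zero (hP_sa l) (hP_orth l k hlk)]]
    simp [norm_smul, mul_pow]
  rw [← pow_le_pow_iff_left₀ (norm_nonneg _) (by positivity) two_ne_zero, hpyth, mul_pow,
    Real.sq_sqrt (by positivity), Finset.sum_mul]
  gcongr with l
  simpa using (P l).le_of_opNorm_le (IsStarProjection.norm_le _ ⟨hP_idem l, hP_sa l⟩) x

end OrthogonalProjections

theorem eq_corner_and_succ_eq_of_recursion {A : Type*} [Semigroup A] {q r b : A} {Y : ℕ → A}
    (hqrq : q * (r * q) = r * q) (hqb : q * b = b) (hbq : b * q = b)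
    (hY0 : Y 0 = q * Y 0 * q) (hY : ∀ n, Y (n + 1) = r * Y n * b) :
    ∀ n, Y n = q * Y n * q ∧ Y (n + 1) = r * q * Y n * b := by
  have hstep : ∀ n, Y n = q * Y n * q → Y (n + 1) = r * q * Y n * b := fun n hn => by
    rw [hY]
    conv_lhs => rw [hn]
    simp only [mul_assoc, hqb]
  intro n
  induction n with
  | zero => exact ⟨hY0, hstep 0 hY0⟩
  | succ n ih =>
    have hcorner : Y (n + 1) = q * Y (n + 1) * q := by
      rw [ih.2]
      simp only [← mul_assoc, hqrq]
      simp only [mul_assoc, hbq]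
    exact ⟨hcorner, hstep _ hcorner⟩

theorem norm_le_pow_mul_of_eq_mul_mul {A : Type*} [SeminormedRing A] {a b : A} {Y : ℕ → A}
    (hY : ∀ n, Y (n + 1) = a * Y n * b) (n : ℕ) : ‖Y n‖ ≤ (‖a‖ * ‖b‖) ^ n * ‖Y 0‖ := by
  induction n with
  | zero => simp
  | succ n ih =>
    calc ‖Y (n + 1)‖ ≤ ‖a‖ * ‖Y n‖ * ‖b‖ := by rw [hY]; exact norm_mul₃_le
      _ ≤ ‖a‖ * ((‖a‖ * ‖b‖) ^ n * ‖Y 0‖) * ‖b‖ := by gcongr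
      _ = (‖a‖ * ‖b‖) ^ (n + 1) * ‖Y 0‖ := by ring

theorem stmt_11_general {H : Type*} [NormedAddCommGroup H] [InnerProductSpace ℂ H] [CompleteSpace H]
    (P : ℕ → H →L[ℂ] H)
    (hP_sa : ∀ l, IsSelfAdjoint (P l))
    (hP_idem : ∀ l, P l * P l = P l)
    (hP_orth : ∀ l k, l ≠ k → P l * P k = 0)
    (s : ℕ → ℝ)
    (R : H →L[ℂ] H)
    (hR : ∀ l, R * P l = (((s l)⁻¹ : ℝ) : ℂ) • P l)
    (Q SL : ℕ → H →L[ℂ] H)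
    (hQ : ∀ L, Q L = ∑ l ∈ Finset.range (L + 1), P l)
    (hSL : ∀ L, SL L = ∑ l ∈ Finset.range (L + 1), (s l : ℂ) • P l)
    (X : H →L[ℂ] H) (L : ℕ)
    (Y : ℕ → H →L[ℂ] H)
    (hY0 : Y 0 = Q L * X * Q L)
    (hYrec : ∀ n, Y (n + 1) = R * Y n * SL L) :
    ∀ n : ℕ,
      Y n = Q L * Y n * Q L ∧
      ‖Y n‖ ≤ (Real.sqrt (∑ l ∈ Finset.range (L + 1), (s l) ^ 2) *
          Real.sqrt (∑ l ∈ Finset.range (L + 1), ((s l)⁻¹) ^ 2)) ^ n * ‖Q L * X * Q L‖ := by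
  have hmul := sum_smul_mul_sum_smul (R := ℂ) hP_idem hP_orth
  have hQ' : Q L = ∑ l ∈ Finset.range (L + 1), (1 : ℂ) • P l := by simp [hQ]
  have hRQ : R * Q L = ∑ l ∈ Finset.range (L + 1), (((s l)⁻¹ : ℝ) : ℂ) • P l := by
    rw [hQ, Finset.mul_sum]
    exact Finset.sum_congr rfl fun l _ => hR l
  have hQQ : Q L * Q L = Q L := by rw [hQ', hmul]; simp
  have hQRQ : Q L * (R * Q L) = R * Q L := by rw [hRQ, hQ', hmul]; simp
  have hQS : Q L * SL L = SL L := by rw [hSL, hQ', hmul]; simp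
  have hSQ : SL L * Q L = SL L := by rw [hSL, hQ', hmul]; simp
  have hY0_corner : Y 0 = Q L * Y 0 * Q L := by
    rw [hY0]
    simp only [← mul_assoc, hQQ]
    simp only [mul_assoc, hQQ]
  have hcorner := eq_corner_and_succ_eq_of_recursion hQRQ hQS hSQ hY0_corner hYrec
  have hnorm_RQ : ‖R * Q L‖ ≤ √(∑ l ∈ Finset.range (L + 1), (s l)⁻¹ ^ 2) :=
    hRQ ▸ norm_sum_smul_le_sqrt_sum_sq hP_sa hP_idem hP_orth _ _
  have hnorm_SL : ‖SL L‖ ≤ √(∑ l ∈ Finset.range (L + 1), s l ^ 2) :=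
    hSL L ▸ norm_sum_smul_le_sqrt_sum_sq hP_sa hP_idem hP_orth _ _
  intro n
  refine ⟨(hcorner n).1, ?_⟩
  calc ‖Y n‖ ≤ (‖R * Q L‖ * ‖SL L‖) ^ n * ‖Y 0‖ :=
        norm_le_pow_mul_of_eq_mul_mul (fun n => (hcorner n).2) n
    _ ≤ _ := by
      rw [hY0, mul_comm √_]
      gcongr

/-- (Lemma 3 of the paper, parts (i) and (iii).) The iterates
`Y_0 = Q_L X Q_L`, `Y_{n+1} = R Y_n S_L` (realizing `T_S^n(X_L) = S^{-n} X_L S^n`)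
satisfy `Y_n = Q_L Y_n Q_L` and `‖Y_n‖ ≤ (s_L^+ s_L^-)^n ‖Q_L X Q_L‖`. -/
theorem stmt_11 {H : Type*} [NormedAddCommGroup H] [InnerProductSpace ℂ H] [CompleteSpace H]
    (P : ℕ → H →L[ℂ] H)
    (hP_sa : ∀ l, IsSelfAdjoint (P l))
    (hP_idem : ∀ l, P l * P l = P l)
    (hP_orth : ∀ l k, l ≠ k → P l * P k = 0)
    (s : ℕ → ℝ) (hs : ∀ l, 0 < s l)
    (R : H →L[ℂ] H)
    (hR : ∀ l, R * P l = (((s l)⁻¹ : ℝ) : ℂ) • P l)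
    (Q SL : ℕ → H →L[ℂ] H)
    (hQ : ∀ L, Q L = ∑ l ∈ Finset.range (L + 1), P l)
    (hSL : ∀ L, SL L = ∑ l ∈ Finset.range (L + 1), (s l : ℂ) • P l)
    (X : H →L[ℂ] H) (L : ℕ)
    (Y : ℕ → H →L[ℂ] H)
    (hY0 : Y 0 = Q L * X * Q L)
    (hYrec : ∀ n, Y (n + 1) = R * Y n * SL L) :
    ∀ n : ℕ,
      Y n = Q L * Y n * Q L ∧
      ‖Y n‖ ≤ (Real.sqrt (∑ l ∈ Finset.range (L + 1), (s l) ^ 2) *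
          Real.sqrt (∑ l ∈ Finset.range (L + 1), ((s l)⁻¹) ^ 2)) ^ n * ‖Q L * X * Q L‖ :=
  stmt_11_general P hP_sa hP_idem hP_orth s R hR Q SL hQ hSL X L Y hY0 hYrec
end

section
/- Let R be a bounded, injective, self-adjoint operator on a complex Hilbert space H. Suppose that for every α > 0 there exists β > 0 with the property: for all bounded operators X, Y on H satisfying Y R = R X and ‖Y‖ ≤ α ‖X‖, there exists a bounded operator Z with Z R = R Y and ‖Z‖ ≤ β ‖Y‖. Let n ≥ 1 be an integer and (X_j)_{j∈ℕ} a sequence of bounded operators such that, for some α > 0 and every j, there exists a bounded Y_j with Y_j R = R (R^n X_j) and ‖Y_j‖ ≤ α ‖R^n X_j‖, and such that ‖R^n X_j‖ → 0 as j → ∞. Then for every k ≥ 0 and every sequence (Z_j) of bounded operators satisfying Z_j R^k = R^{n+k} X_j for all j, one has ‖Z_j‖ → 0 as j → ∞. -/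
/-!
Write `A = R^n X_j`. Iterating the hypothesis `k` times along the chain
`A, T_S A, T_S² A, …` produces `W` with `W R^k = R^k A` and `‖W‖ ≤ C_k ‖A‖`, where `C_k`
depends only on `α` and `k`. Since `R` is self-adjoint and injective, `R^k` has dense range,
so `Z_j = W`, and `‖Z_j‖ ≤ C_k ‖R^n X_j‖ → 0`.
-/

open Filter

theorem IsSelfAdjoint.denseRange_of_injective {𝕜 E : Type*} [RCLike 𝕜] [NormedAddCommGroup E]
    [InnerProductSpace 𝕜 E] [CompleteSpace E] {T : E →L[𝕜] E} (hT : IsSelfAdjoint T)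
    (hinj : Function.Injective T) : DenseRange T := by
  have horth : T.rangeᗮ = ⊥ := by
    rw [T.orthogonal_range, hT.adjoint_eq, LinearMap.ker_eq_bot.mpr hinj]
  have hdense := Submodule.dense_iff_topologicalClosure_eq_top.mpr
    (Submodule.topologicalClosure_eq_top_iff.mpr horth)
  rwa [LinearMap.coe_range, ContinuousLinearMap.coe_coe] at hdense

theorem DenseRange.iterate {X : Type*} [TopologicalSpace X] {f : X → X} (hf : DenseRange f)
    (hc : Continuous f) (k : ℕ) : DenseRange f^[k] := by
  induction k with
  | zero => exact denseRange_id
  | succ k ih => rw [Function.iterate_succ']; exact hf.comp ih hc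

theorem ContinuousLinearMap.mul_right_cancel_of_denseRange {R M : Type*} [Semiring R]
    [TopologicalSpace M] [T2Space M] [AddCommMonoid M] [Module R M] {T A B : M →L[R] M}
    (hT : DenseRange T) (h : A * T = B * T) : A = B :=
  DFunLike.coe_injective (hT.equalizer A.continuous B.continuous (congrArg DFunLike.coe h))

theorem exists_mul_pow_eq_pow_mul_norm_le {M : Type*} [Monoid M] [Norm M] {R : M}
    (hyp : ∀ α : ℝ, 0 < α → ∃ β : ℝ, 0 < β ∧ ∀ X Y : M, Y * R = R * X → ‖Y‖ ≤ α * ‖X‖ →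
      ∃ Z : M, Z * R = R * Y ∧ ‖Z‖ ≤ β * ‖Y‖)
    (k : ℕ) {α : ℝ} (hα : 0 < α) :
    ∃ C : ℝ, 0 ≤ C ∧ ∀ A Y : M, Y * R = R * A → ‖Y‖ ≤ α * ‖A‖ →
      ∃ W : M, W * R ^ k = R ^ k * A ∧ ‖W‖ ≤ C * ‖A‖ := by
  induction k generalizing α with
  | zero => exact ⟨1, zero_le_one, fun A _ _ _ => ⟨A, by simp, by simp⟩⟩
  | succ k ih =>
    obtain ⟨β, hβ, hstep⟩ := hyp α hα
    obtain ⟨C, hC, hW⟩ := ih hβ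
    refine ⟨C * α, mul_nonneg hC hα.le, fun A Y hY hYn => ?_⟩
    obtain ⟨Z, hZ, hZn⟩ := hstep A Y hY hYn
    obtain ⟨W, hW, hWn⟩ := hW Y Z hZ hZn
    refine ⟨W, ?_, ?_⟩
    · rw [pow_succ, ← mul_assoc, hW, mul_assoc, hY, ← mul_assoc]
    · calc ‖W‖ ≤ C * ‖Y‖ := hWn
        _ ≤ C * (α * ‖A‖) := mul_le_mul_of_nonneg_left hYn hC
        _ = C * α * ‖A‖ := (mul_assoc _ _ _).symm

theorem stmt_13_general {H : Type*} [NormedAddCommGroup H] [InnerProductSpace ℂ H] [CompleteSpace H]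
    (R : H →L[ℂ] H) (hR_inj : Function.Injective R) (hR_sa : IsSelfAdjoint R)
    (hyp : ∀ α : ℝ, 0 < α → ∃ β : ℝ, 0 < β ∧
      ∀ X Y : H →L[ℂ] H, Y * R = R * X → ‖Y‖ ≤ α * ‖X‖ →
        ∃ Z : H →L[ℂ] H, Z * R = R * Y ∧ ‖Z‖ ≤ β * ‖Y‖)
    (n : ℕ)
    (X : ℕ → H →L[ℂ] H)
    (α : ℝ) (hα : 0 < α)
    (hXα : ∀ j, ∃ Y : H →L[ℂ] H,
      Y * R = R * (R ^ n * X j) ∧ ‖Y‖ ≤ α * ‖R ^ n * X j‖)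
    (hX0 : Tendsto (fun j => ‖R ^ n * X j‖) atTop (nhds 0)) :
    ∀ k : ℕ, ∀ Z : ℕ → H →L[ℂ] H,
      (∀ j, Z j * R ^ k = R ^ (n + k) * X j) →
      Tendsto (fun j => ‖Z j‖) atTop (nhds 0) := by
  intro k Z hZ
  have hdense : DenseRange (R ^ k) := by
    rw [FunLike.coe_pow_eq_iterate]
    exact (hR_sa.denseRange_of_injective hR_inj).iterate R.continuous k
  obtain ⟨C, -, hC⟩ := exists_mul_pow_eq_pow_mul_norm_le hyp k hα
  have hbound : ∀ j, ‖Z j‖ ≤ C * ‖R ^ n * X j‖ := fun j => by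
    obtain ⟨Y, hY, hYn⟩ := hXα j
    obtain ⟨W, hW, hWn⟩ := hC _ Y hY hYn
    have hZW : Z j = W := ContinuousLinearMap.mul_right_cancel_of_denseRange hdense <| by
      rw [hZ j, hW, add_comm, pow_add, mul_assoc]
    exact hZW ▸ hWn
  exact squeeze_zero (fun j => norm_nonneg _) hbound (by simpa using hX0.const_mul C)

/-- (Proposition 4 of the paper.) Suppose `T_S` maps each
`𝔄_S^{(α)}` into some `𝔄_S^{(β)}` (relations `Y R = R X` encode `Y = S^{-1} X S`
with `S = R^{-1}`). If `S^{-n} X_j ∈ 𝔄_S^{(α)}` for all `j` and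
`‖S^{-n} X_j‖ → 0`, then `‖S^{-n-k} X_j S^k‖ → 0` for every `k ≥ 0`, where
`Z_j = S^{-n-k} X_j S^k` is encoded by `Z_j R^k = R^{n+k} X_j`. -/
theorem stmt_13 {H : Type*} [NormedAddCommGroup H] [InnerProductSpace ℂ H] [CompleteSpace H]
    (R : H →L[ℂ] H) (hR_inj : Function.Injective R) (hR_sa : IsSelfAdjoint R)
    (hyp : ∀ α : ℝ, 0 < α → ∃ β : ℝ, 0 < β ∧
      ∀ X Y : H →L[ℂ] H, Y * R = R * X → ‖Y‖ ≤ α * ‖X‖ →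
        ∃ Z : H →L[ℂ] H, Z * R = R * Y ∧ ‖Z‖ ≤ β * ‖Y‖)
    (n : ℕ) (hn : 1 ≤ n)
    (X : ℕ → H →L[ℂ] H)
    (α : ℝ) (hα : 0 < α)
    (hXα : ∀ j, ∃ Y : H →L[ℂ] H,
      Y * R = R * (R ^ n * X j) ∧ ‖Y‖ ≤ α * ‖R ^ n * X j‖)
    (hX0 : Tendsto (fun j => ‖R ^ n * X j‖) atTop (nhds 0)) :
    ∀ k : ℕ, ∀ Z : ℕ → H →L[ℂ] H,
      (∀ j, Z j * R ^ k = R ^ (n + k) * X j) →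
      Tendsto (fun j => ‖Z j‖) atTop (nhds 0) :=
  stmt_13_general R hR_inj hR_sa hyp n X α hα hXα hX0
end

section
/- Let A and B be bounded operators on a complex Hilbert space H and let t ∈ ℝ. Then exp(i t A) − exp(i t B) = i ∫₀ᵗ exp(i A (t − s)) (A − B) exp(i B s) ds, where the integral is the Bochner integral of the continuous function s ↦ exp(i A (t − s)) (A − B) exp(i B s) with values in the Banach space of bounded operators on H. -/
/-!
The function `s ↦ exp((t - s) X) exp(s Y)` runs from `exp(t X)` at `s = 0` to `exp(t Y)` at
`s = t`, and its derivative is `exp((t - s) X) (Y - X) exp(s Y)`: no commutation of `X` and `Y`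
is needed, since each factor is differentiated on its own side. The fundamental theorem of
calculus gives the formula for any real Banach algebra; the theorem is the case `X = iA`, `Y = iB`.
-/

open NormedSpace

section Duhamel

variable {𝔸 : Type*} [NormedRing 𝔸] [NormedAlgebra ℝ 𝔸] [CompleteSpace 𝔸]

theorem continuous_exp_smul (X : 𝔸) : Continuous fun s : ℝ => exp (s • X) :=
  continuous_iff_continuousAt.2 fun s => (hasDerivAt_exp_smul_const X s).continuousAt

theorem hasDerivAt_exp_smul_sub_mul_exp_smul (X Y : 𝔸) (t s : ℝ) :
    HasDerivAt (fun s : ℝ => exp ((t - s) • X) * exp (s • Y))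
      (exp ((t - s) • X) * (Y - X) * exp (s • Y)) s := by
  have hX : HasDerivAt (fun s : ℝ => exp ((t - s) • X)) (-(exp ((t - s) • X) * X)) s := by
    have := (hasDerivAt_exp_smul_const X (t - s)).scomp s ((hasDerivAt_id s).const_sub t)
    simpa [Function.comp_def] using this
  refine (hX.mul (hasDerivAt_exp_smul_const' Y s)).congr_deriv ?_
  noncomm_ring

theorem exp_smul_sub_exp_smul_eq_integral (X Y : 𝔸) (t : ℝ) :
    exp (t • X) - exp (t • Y) =
      ∫ s in (0 : ℝ)..t, exp ((t - s) • X) * (X - Y) * exp (s • Y) := by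
  have hcont : Continuous fun s : ℝ => exp ((t - s) • X) * (Y - X) * exp (s • Y) :=
    (((continuous_exp_smul X).comp (continuous_sub_left t)).mul continuous_const).mul
      (continuous_exp_smul Y)
  have hFTC := intervalIntegral.integral_eq_sub_of_hasDerivAt
    (fun s _ => hasDerivAt_exp_smul_sub_mul_exp_smul X Y t s) (hcont.intervalIntegrable 0 t)
  simp only [sub_self, zero_smul, exp_zero, sub_zero, mul_one, one_mul] at hFTC
  rw [← neg_sub (exp (t • Y)), ← hFTC, ← neg_sub Y X]
  simp only [mul_neg, neg_mul, intervalIntegral.integral_neg]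

end Duhamel

/-- (Equation (45) of the paper, Duhamel formula.) For bounded
operators `A`, `B` and `t ∈ ℝ`,
`exp(i t A) − exp(i t B) = i ∫₀ᵗ exp(i A (t − s)) (A − B) exp(i B s) ds`. -/
theorem stmt_14 {H : Type*} [NormedAddCommGroup H] [InnerProductSpace ℂ H] [CompleteSpace H]
    (A B : H →L[ℂ] H) (t : ℝ) :
    exp ((Complex.I * t) • A) - exp ((Complex.I * t) • B) =
      Complex.I • ∫ s in (0 : ℝ)..t,
        exp ((Complex.I * (t - s)) • A) * (A - B) * exp ((Complex.I * s) • B) := by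
  have hsmul : ∀ (r : ℝ) (X : H →L[ℂ] H), (Complex.I * r) • X = r • (Complex.I • X) := by
    intro r X
    rw [mul_comm, mul_smul, Complex.coe_smul]
  simp only [hsmul, ← Complex.ofReal_sub]
  rw [exp_smul_sub_exp_smul_eq_integral, ← smul_sub, ← intervalIntegral.integral_smul]
  simp only [mul_smul_comm, smul_mul_assoc]
end

section
/- Let A and B be bounded self-adjoint operators on a complex Hilbert space H, and let R be a bounded operator on H commuting with A: R A = A R. Then for every t ∈ ℝ, ‖R (exp(i t A) − exp(i t B))‖ ≤ |t| · ‖R (A − B)‖. -/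
/-!
Duhamel's formula: with `G s = exp (-s x) * r * exp (s y)` one has
`G' s = exp (-s x) * (r y - x r) * exp (s y)`, and since `r` commutes with `x`,
`r (exp (t x) - exp (t y)) = exp (t x) * (G 0 - G t)`. For skew-adjoint `x`, `y` the
exponentials are unitary, hence isometric, so `‖G'‖ = ‖r (x - y)‖` and the mean value
inequality gives the bound `|t| ‖r (x - y)‖`.
-/

open NormedSpace

theorem hasDerivAt_exp_neg_smul_mul_mul_exp_smul {𝕂 𝔸 : Type*} [RCLike 𝕂] [NormedRing 𝔸]
    [NormedAlgebra 𝕂 𝔸] [CompleteSpace 𝔸] (x y r : 𝔸) (s : 𝕂) :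
    HasDerivAt (fun u : 𝕂 => exp (-u • x) * r * exp (u • y))
      (exp (-s • x) * (r * y - x * r) * exp (s • y)) s := by
  have hx : HasDerivAt (fun u : 𝕂 => exp (-u • x)) (exp (-s • x) * -x) s := by
    simpa only [smul_neg, neg_smul] using hasDerivAt_exp_smul_const (-x) s
  refine ((hx.mul_const r).mul (hasDerivAt_exp_smul_const' y s)).congr_deriv ?_
  noncomm_ring

section CStarAlgebra

variable {𝔸 : Type*} [CStarAlgebra 𝔸]

theorem exp_smul_mem_unitary {x : 𝔸} (hx : x ∈ skewAdjoint 𝔸) (s : ℝ) :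
    exp (s • x) ∈ unitary 𝔸 :=
  letI : NormedAlgebra ℚ 𝔸 := .restrictScalars ℚ ℂ 𝔸
  exp_mem_unitary_of_mem_skewAdjoint (skewAdjoint.smul_mem s hx)

theorem norm_mul_exp_smul_sub_exp_smul_le {x y r : 𝔸} (hx : x ∈ skewAdjoint 𝔸)
    (hy : y ∈ skewAdjoint 𝔸) (hrx : Commute r x) (t : ℝ) :
    ‖r * (exp (t • x) - exp (t • y))‖ ≤ |t| * ‖r * (x - y)‖ := by
  let _ : NormedAlgebra ℚ 𝔸 := .restrictScalars ℚ ℂ 𝔸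
  set G : ℝ → 𝔸 := fun u => exp (-u • x) * r * exp (u • y)
  have hderiv : ∀ s : ℝ, ‖exp (-s • x) * (r * y - x * r) * exp (s • y)‖ ≤ ‖r * (x - y)‖ := by
    intro s
    rw [CStarRing.norm_mul_mem_unitary _ (exp_smul_mem_unitary hy s),
      CStarRing.norm_mem_unitary_mul _ (exp_smul_mem_unitary hx (-s)), ← hrx.eq, ← mul_sub,
      ← norm_neg, ← mul_neg, neg_sub]
  have hmvt : ‖G t - G 0‖ ≤ ‖r * (x - y)‖ * ‖t - 0‖ :=
    Convex.norm_image_sub_le_of_norm_hasDerivWithin_le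
      (fun s _ => (hasDerivAt_exp_neg_smul_mul_mul_exp_smul x y r s).hasDerivWithinAt)
      (fun s _ => hderiv s) convex_univ trivial trivial
  have hG : r * (exp (t • x) - exp (t • y)) = exp (t • x) * (G 0 - G t) := by
    have hinv : exp (t • x) * exp (-t • x) = 1 := by
      rw [neg_smul, ← exp_add_of_commute (Commute.refl _).neg_right, add_neg_cancel, exp_zero]
    simp only [G, zero_smul, neg_zero, exp_zero, one_mul, mul_one, mul_sub, ← mul_assoc, hinv,
      ((hrx.smul_right t).exp_right).eq]
  rw [hG, CStarRing.norm_mem_unitary_mul _ (exp_smul_mem_unitary hx t), norm_sub_rev]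
  exact hmvt.trans_eq (by rw [sub_zero, Real.norm_eq_abs, mul_comm])

theorem IsSelfAdjoint.norm_mul_exp_I_smul_sub_exp_I_smul_le {a b r : 𝔸} (ha : IsSelfAdjoint a)
    (hb : IsSelfAdjoint b) (hra : Commute r a) (t : ℝ) :
    ‖r * (NormedSpace.exp ((Complex.I * t) • a) - NormedSpace.exp ((Complex.I * t) • b))‖ ≤
      |t| * ‖r * (a - b)‖ := by
  have hI : Complex.I ∈ skewAdjoint ℂ := skewAdjoint.mem_iff.mpr Complex.conj_I
  have key := norm_mul_exp_smul_sub_exp_smul_le (ha.smul_mem_skewAdjoint hI)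
    (hb.smul_mem_skewAdjoint hI) (hra.smul_right Complex.I) t
  rwa [← smul_sub, mul_smul_comm, norm_smul, Complex.norm_I, one_mul,
    RCLike.real_smul_eq_coe_smul (K := ℂ), RCLike.real_smul_eq_coe_smul (K := ℂ), smul_smul,
    smul_smul, mul_comm] at key

end CStarAlgebra

/-- For bounded self-adjoint `A`, `B` and a bounded `R`
commuting with `A`, `‖R (exp(i t A) − exp(i t B))‖ ≤ |t| ‖R (A − B)‖`. -/
theorem stmt_15 {H : Type*} [NormedAddCommGroup H] [InnerProductSpace ℂ H] [CompleteSpace H]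
    (A B : H →L[ℂ] H) (hA : IsSelfAdjoint A) (hB : IsSelfAdjoint B)
    (R : H →L[ℂ] H) (hRA : R * A = A * R) (t : ℝ) :
    ‖R * (NormedSpace.exp ((Complex.I * t) • A) - NormedSpace.exp ((Complex.I * t) • B))‖ ≤
      |t| * ‖R * (A - B)‖ :=
  hA.norm_mul_exp_I_smul_sub_exp_I_smul_le hB hRA t
end

section
/- Let (H_L)_{L∈ℕ} be a sequence of bounded self-adjoint operators on a complex Hilbert space H and let R be a bounded operator on H with R H_L = H_L R for every L. Suppose that ‖R (H_L − H_M)‖ → 0 as L, M → ∞ (for every ε > 0 there is N with ‖R(H_L − H_M)‖ < ε for all L, M ≥ N). Then for every t ∈ ℝ, ‖R (exp(i t H_L) − exp(i t H_M))‖ → 0 as L, M → ∞. -/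
/-!
Duhamel's formula: `f s = exp (i (t - s) a) r exp (i s b)` runs from `exp (i t a) r = r exp (i t a)`
to `r exp (i t b)`, and its derivative `i exp (i (t - s) a) r (b - a) exp (i s b)` has norm
`‖r (a - b)‖` because the exponentials are unitary. By the mean value inequality
`‖r (exp (i t a) - exp (i t b))‖ ≤ |t| ‖r (a - b)‖`, so the Cauchy condition on `r H_L` passes to
`r exp (i t H_L)`.
-/

open NormedSpace

section CStarAlgebra

open Complex

variable {A : Type*} [CStarAlgebra A]

theorem IsSelfAdjoint.exp_I_mul_smul_mem_unitary {a : A} (ha : IsSelfAdjoint a) (t : ℝ) :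
    NormedSpace.exp ((I * t) • a) ∈ unitary A := by
  let +nondep : NormedAlgebra ℚ A := .restrictScalars ℚ ℂ A
  refine exp_mem_unitary_of_mem_skewAdjoint (ha.smul_mem_skewAdjoint ?_)
  simp [skewAdjoint.mem_iff, mul_comm]

theorem hasDerivAt_exp_I_mul_smul (x : A) (s : ℝ) :
    HasDerivAt (fun s : ℝ => exp ((I * s) • x)) (I • (exp ((I * s) • x) * x)) s := by
  have hlin : HasDerivAt (fun s : ℝ => I * (s : ℂ)) I s := by
    simpa using (hasDerivAt_id (s : ℂ)).comp_ofReal.const_mul I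
  exact (hasDerivAt_exp_smul_const x (I * s)).scomp s hlin

theorem norm_mul_exp_I_mul_smul_sub_le {a b r : A} (ha : IsSelfAdjoint a) (hb : IsSelfAdjoint b)
    (hra : Commute r a) (t : ℝ) :
    ‖r * (exp ((I * t) • a) - exp ((I * t) • b))‖ ≤ |t| * ‖r * (a - b)‖ := by
  set f : ℝ → A := fun s => exp ((I * ↑(t - s)) • a) * r * exp ((I * s) • b)
  have hf : ∀ s, HasDerivAt f
      (I • (exp ((I * ↑(t - s)) • a) * (r * (b - a)) * exp ((I * s) • b))) s := by
    intro s
    have hUa : HasDerivAt (fun s : ℝ => exp ((I * ↑(t - s)) • a))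
        (-(I • (exp ((I * ↑(t - s)) • a) * a))) s :=
      ((hasDerivAt_exp_I_mul_smul a (t - s)).scomp s ((hasDerivAt_id s).const_sub t)).congr_deriv
        (neg_one_smul ℝ _)
    have hUb : exp ((I * s) • b) * b = b * exp ((I * s) • b) :=
      ((Commute.refl b).smul_left _).exp_left.eq
    refine ((hUa.mul_const r).mul (hasDerivAt_exp_I_mul_smul b s)).congr_deriv ?_
    rw [mul_sub, hra.eq, mul_sub, sub_mul]
    simp only [smul_sub, mul_smul_comm, smul_mul_assoc, neg_mul, mul_assoc, hUb]
    abel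
  have hf_norm : ∀ s, ‖I • (exp ((I * ↑(t - s)) • a) * (r * (b - a)) * exp ((I * s) • b))‖
      = ‖r * (a - b)‖ := by
    intro s
    rw [norm_smul, norm_I, one_mul,
      CStarRing.norm_mul_mem_unitary _ (hb.exp_I_mul_smul_mem_unitary s),
      CStarRing.norm_mem_unitary_mul _ (ha.exp_I_mul_smul_mem_unitary _),
      ← norm_neg, ← mul_neg, neg_sub]
  have hends : f 0 - f t = r * (exp ((I * t) • a) - exp ((I * t) • b)) := by
    simp only [f, sub_zero, sub_self, ofReal_zero, mul_zero, zero_smul,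
      NormedSpace.exp_zero, mul_one, one_mul]
    rw [mul_sub, ((hra.smul_right _).exp_right).eq]
  calc ‖r * (exp ((I * t) • a) - exp ((I * t) • b))‖ = ‖f t - f 0‖ := by
        rw [← hends, norm_sub_rev]
    _ ≤ ‖r * (a - b)‖ * ‖t - 0‖ :=
      convex_univ.norm_image_sub_le_of_norm_hasDerivWithin_le (fun s _ => (hf s).hasDerivWithinAt)
        (fun s _ => (hf_norm s).le) (Set.mem_univ 0) (Set.mem_univ t)
    _ = |t| * ‖r * (a - b)‖ := by rw [sub_zero, Real.norm_eq_abs, mul_comm]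

end CStarAlgebra

/-- (Condition (1) of Proposition 6 of the paper.) If the
bounded self-adjoint operators `H_L` all commute with `R` and
`‖R (H_L − H_M)‖ → 0` as `L, M → ∞`, then for every `t ∈ ℝ`,
`‖R (exp(i t H_L) − exp(i t H_M))‖ → 0` as `L, M → ∞`. -/
theorem stmt_16 {H : Type*} [NormedAddCommGroup H] [InnerProductSpace ℂ H] [CompleteSpace H]
    (HL : ℕ → H →L[ℂ] H) (hsa : ∀ L, IsSelfAdjoint (HL L))
    (R : H →L[ℂ] H) (hcomm : ∀ L, R * HL L = HL L * R)
    (hcauchy : ∀ ε > (0 : ℝ), ∃ N : ℕ, ∀ L ≥ N, ∀ M ≥ N, ‖R * (HL L - HL M)‖ < ε)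
    (t : ℝ) :
    ∀ ε > (0 : ℝ), ∃ N : ℕ, ∀ L ≥ N, ∀ M ≥ N,
      ‖R * (exp ((Complex.I * t) • HL L) - exp ((Complex.I * t) • HL M))‖ < ε := by
  intro ε hε
  have ht : 0 < |t| + 1 := by positivity
  obtain ⟨N, hN⟩ := hcauchy (ε / (|t| + 1)) (div_pos hε ht)
  refine ⟨N, fun L hL M hM => ?_⟩
  calc ‖R * (exp ((Complex.I * t) • HL L) - exp ((Complex.I * t) • HL M))‖
      ≤ |t| * ‖R * (HL L - HL M)‖ := norm_mul_exp_I_mul_smul_sub_le (hsa L) (hsa M) (hcomm L) t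
    _ ≤ (|t| + 1) * ‖R * (HL L - HL M)‖ := by gcongr; linarith
    _ < (|t| + 1) * (ε / (|t| + 1)) := by gcongr; exact hN L hL M hM
    _ = ε := mul_div_cancel₀ ε ht.ne'
end
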